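/- Let a ≥ 0 and 0 < p < (2+a)/2. There exists a constant c = c(p,a) such that for all y₁, y₂ on the unit circle ∂D₀, ∫_{D₀} (1 − |x|)^a · |P₀(x,y₁) − P₀(x,y₂)|^p dx ≤ c·|y₁ − y₂|^p. -/

import Mathlib

/-!
For `x` in the disc put `ρ = 1 - ‖x‖` and `rᵢ = ‖x - yᵢ‖`, so that `ρ ≤ rᵢ`. The explicit formula
for the kernel gives `|P₀(x,y₁) - P₀(x,y₂)| ≤ (2/π) ‖y₁ - y₂‖ ρ / min(r₁, r₂)³`, hence the integrand
is at most `(2/π)^p ‖y₁ - y₂‖^p min(r₁, r₂)^(a - 2p)`. Since `a - 2p > -2`, the function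
`‖x - y‖^(a - 2p)` is integrable on the disc, with integral bounded independently of `y` by
translation invariance of Lebesgue measure.
-/

open MeasureTheory

/-- The Poisson kernel of the unit disc, viewed in `ℂ ≃ ℝ²`. -/
noncomputable def unitDiscPoissonKernel (x y : ℂ) : ℝ :=
  (1 / (2 * Real.pi)) * (1 - ‖x‖ ^ 2) / ‖y - x‖ ^ 2

open Metric Module Real

lemma preimage_sub_right_ball_zero {G : Type*} [SeminormedAddCommGroup G] (y : G) (r : ℝ) :
    (· - y) ⁻¹' ball 0 r = ball y r := by
  ext x; simp [dist_eq_norm]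

lemma min_rpow_le_rpow_add_rpow {r s : ℝ} (hr : 0 ≤ r) (hs : 0 ≤ s) (e : ℝ) :
    min r s ^ e ≤ r ^ e + s ^ e := by
  rcases min_choice r s with h | h <;> rw [h]
  · linarith [rpow_nonneg hs e]
  · linarith [rpow_nonneg hr e]

section Translation

variable {G F : Type*} [NormedAddCommGroup G] [MeasurableSpace G] [BorelSpace G]
  {μ : Measure G} [μ.IsAddRightInvariant] [NormedAddCommGroup F]

lemma integrableOn_ball_comp_sub_right_iff {f : G → F} (y : G) (r : ℝ) :
    IntegrableOn (fun x => f (x - y)) (ball y r) μ ↔ IntegrableOn f (ball 0 r) μ := by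
  rw [← preimage_sub_right_ball_zero y r]
  exact (measurePreserving_sub_right μ y).integrableOn_comp_preimage
    (measurableEmbedding_subRight y)

lemma setIntegral_ball_comp_sub_right [NormedSpace ℝ F] (f : G → F) (y : G) (r : ℝ) :
    ∫ x in ball y r, f (x - y) ∂μ = ∫ z in ball 0 r, f z ∂μ := by
  rw [← preimage_sub_right_ball_zero y r]
  exact (measurePreserving_sub_right μ y).setIntegral_preimage_emb
    (measurableEmbedding_subRight y) _ _

end Translation

section NormRpow

variable {E : Type*} [NormedAddCommGroup E] [NormedSpace ℝ E] [FiniteDimensional ℝ E]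
  [MeasurableSpace E] [BorelSpace E] {μ : Measure E} [μ.IsAddHaarMeasure] {e : ℝ}

lemma integrableOn_ball_norm_rpow (hd : 1 ≤ finrank ℝ E) (he : -(finrank ℝ E : ℝ) < e)
    (r : ℝ) : IntegrableOn (fun z : E => ‖z‖ ^ e) (ball 0 r) μ :=
  integrableOn_ball_of_norm_le_rpow (C := 1) (α := -e) hd (by linarith)
    (ae_of_all _ fun z => by simp [abs_of_nonneg (rpow_nonneg (norm_nonneg z) e)])
    (measurable_norm.pow_const e).aestronglyMeasurable

lemma integrableOn_norm_sub_rpow (hd : 1 ≤ finrank ℝ E) (he : -(finrank ℝ E : ℝ) < e)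
    {s : Set E} {y : E} {r : ℝ} (hs : s ⊆ ball y r) :
    IntegrableOn (fun x => ‖x - y‖ ^ e) s μ :=
  ((integrableOn_ball_comp_sub_right_iff y r).2 (integrableOn_ball_norm_rpow hd he r)).mono_set hs

lemma setIntegral_norm_sub_rpow_le (hd : 1 ≤ finrank ℝ E) (he : -(finrank ℝ E : ℝ) < e)
    {s : Set E} {y : E} {r : ℝ} (hs : s ⊆ ball y r) :
    ∫ x in s, ‖x - y‖ ^ e ∂μ ≤ ∫ z in ball 0 r, ‖z‖ ^ e ∂μ := by
  rw [← setIntegral_ball_comp_sub_right (fun z => ‖z‖ ^ e) y]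
  exact setIntegral_mono_set (integrableOn_norm_sub_rpow hd he subset_rfl)
    (ae_of_all _ fun x => rpow_nonneg (norm_nonneg _) e) (ae_of_all _ hs)

end NormRpow

lemma one_sub_norm_le_norm_sub {x y : ℂ} (hy : ‖y‖ = 1) : 1 - ‖x‖ ≤ ‖x - y‖ := by
  simpa [hy] using norm_sub_norm_le y x |>.trans_eq (norm_sub_rev y x)

lemma abs_unitDiscPoissonKernel_sub_le {x y₁ y₂ : ℂ} (hx : ‖x‖ < 1) (hy₁ : ‖y₁‖ = 1)
    (hy₂ : ‖y₂‖ = 1) :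
    |unitDiscPoissonKernel x y₁ - unitDiscPoissonKernel x y₂| ≤
      2 / π * ‖y₁ - y₂‖ * (1 - ‖x‖) / min ‖x - y₁‖ ‖x - y₂‖ ^ 3 := by
  have hr₁ : 0 < ‖x - y₁‖ := by linarith [one_sub_norm_le_norm_sub (x := x) hy₁]
  have hr₂ : 0 < ‖x - y₂‖ := by linarith [one_sub_norm_le_norm_sub (x := x) hy₂]
  have hker : unitDiscPoissonKernel x y₁ - unitDiscPoissonKernel x y₂ =
      (1 - ‖x‖ ^ 2) / (2 * π) * (‖x - y₂‖ ^ 2 - ‖x - y₁‖ ^ 2) /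
        (‖x - y₁‖ ^ 2 * ‖x - y₂‖ ^ 2) := by
    unfold unitDiscPoissonKernel
    rw [norm_sub_rev y₁, norm_sub_rev y₂]
    field_simp
  set r₁ := ‖x - y₁‖
  set r₂ := ‖x - y₂‖
  set m := min r₁ r₂
  have hm : 0 < m := lt_min hr₁ hr₂
  have hm₁ : m ≤ r₁ := min_le_left _ _
  have hm₂ : m ≤ r₂ := min_le_right _ _
  have hdiff : |r₂ ^ 2 - r₁ ^ 2| ≤ ‖y₁ - y₂‖ * (r₁ + r₂) := by
    have h := abs_norm_sub_norm_le (x - y₂) (x - y₁)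
    rw [sub_sub_sub_cancel_left] at h
    rw [show r₂ ^ 2 - r₁ ^ 2 = (r₂ - r₁) * (r₁ + r₂) by ring, abs_mul,
      abs_of_pos (by linarith : 0 < r₁ + r₂)]
    gcongr
  have hnum : 0 ≤ 1 - ‖x‖ ^ 2 := by nlinarith [norm_nonneg x]
  rw [hker, abs_div, abs_mul, abs_of_nonneg (by positivity : 0 ≤ (1 - ‖x‖ ^ 2) / (2 * π)),
    abs_of_pos (mul_pos (pow_pos hr₁ 2) (pow_pos hr₂ 2))]
  calc (1 - ‖x‖ ^ 2) / (2 * π) * |r₂ ^ 2 - r₁ ^ 2| / (r₁ ^ 2 * r₂ ^ 2)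
      ≤ 2 * (1 - ‖x‖) / (2 * π) * (‖y₁ - y₂‖ * (r₁ + r₂)) / (r₁ ^ 2 * r₂ ^ 2) := by
        gcongr
        nlinarith [norm_nonneg x]
    _ = 1 / π * ‖y₁ - y₂‖ * (1 - ‖x‖) * (1 / (r₁ * r₂ ^ 2) + 1 / (r₁ ^ 2 * r₂)) := by
        field_simp
    _ ≤ 1 / π * ‖y₁ - y₂‖ * (1 - ‖x‖) * (1 / (m * m ^ 2) + 1 / (m ^ 2 * m)) := by
        gcongr
    _ = 2 / π * ‖y₁ - y₂‖ * (1 - ‖x‖) / m ^ 3 := by ring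

lemma one_sub_norm_rpow_mul_abs_unitDiscPoissonKernel_sub_rpow_le {a p : ℝ} (hp : 0 ≤ p)
    (hap : 0 ≤ a + p) {x y₁ y₂ : ℂ} (hx : ‖x‖ < 1) (hy₁ : ‖y₁‖ = 1) (hy₂ : ‖y₂‖ = 1) :
    (1 - ‖x‖) ^ a * |unitDiscPoissonKernel x y₁ - unitDiscPoissonKernel x y₂| ^ p ≤
      (2 / π) ^ p * ‖y₁ - y₂‖ ^ p * (‖x - y₁‖ ^ (a - 2 * p) + ‖x - y₂‖ ^ (a - 2 * p)) := by
  set ρ := 1 - ‖x‖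
  set m := min ‖x - y₁‖ ‖x - y₂‖
  set d := ‖y₁ - y₂‖
  have hρ : 0 < ρ := by simp only [ρ]; linarith
  have hρm : ρ ≤ m := le_min (one_sub_norm_le_norm_sub hy₁) (one_sub_norm_le_norm_sub hy₂)
  have hm : 0 < m := hρ.trans_le hρm
  calc ρ ^ a * |unitDiscPoissonKernel x y₁ - unitDiscPoissonKernel x y₂| ^ p
      ≤ ρ ^ a * (2 / π * d * ρ / m ^ 3) ^ p := by
        gcongr
        exact abs_unitDiscPoissonKernel_sub_le hx hy₁ hy₂
    _ = (2 / π) ^ p * d ^ p * (ρ ^ (a + p) * m ^ (-(3 * p))) := by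
        rw [div_rpow (by positivity) (by positivity), mul_rpow (by positivity) hρ.le,
          mul_rpow (by positivity) (norm_nonneg _), rpow_add hρ, rpow_neg hm.le,
          rpow_mul hm.le, ← rpow_natCast m 3]
        push_cast
        ring
    _ ≤ (2 / π) ^ p * d ^ p * (m ^ (a + p) * m ^ (-(3 * p))) := by
        gcongr
    _ = (2 / π) ^ p * d ^ p * m ^ (a - 2 * p) := by
        rw [← rpow_add hm]
        ring_nf
    _ ≤ (2 / π) ^ p * d ^ p * (‖x - y₁‖ ^ (a - 2 * p) + ‖x - y₂‖ ^ (a - 2 * p)) := by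
        gcongr
        exact min_rpow_le_rpow_add_rpow (norm_nonneg _) (norm_nonneg _) _

/-- Lemma 4.1(a), case `0 < p < (2+a)/2`: there is `c = c(p,a)` such that for all
`y₁, y₂` on the unit circle,
`∫_{D₀} (1 − |x|)^a·|P₀(x,y₁) − P₀(x,y₂)|^p dx ≤ c·|y₁ − y₂|^p`. -/
theorem integral_abs_poissonKernel_sub_rpow_le_of_lt (a p : ℝ) (ha : 0 ≤ a)
    (hp : 0 < p) (hpa : p < (2 + a) / 2) :
    ∃ c : ℝ, 0 < c ∧ ∀ y₁ y₂ : ℂ, ‖y₁‖ = 1 → ‖y₂‖ = 1 →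
      ∫ x in Metric.ball (0 : ℂ) 1,
          (1 - ‖x‖) ^ a * |unitDiscPoissonKernel x y₁ - unitDiscPoissonKernel x y₂| ^ p
        ≤ c * ‖y₁ - y₂‖ ^ p := by
  set e := a - 2 * p
  have hd : 1 ≤ finrank ℝ ℂ := by simp
  have he : -(finrank ℝ ℂ : ℝ) < e := by rw [Complex.finrank_real_complex]; push_cast; linarith
  have hsub (y : ℂ) (hy : ‖y‖ = 1) : ball 0 1 ⊆ ball y 2 :=
    ball_subset_ball' (by simp [hy]; norm_num)
  set K := ∫ z in ball (0 : ℂ) 2, ‖z‖ ^ e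
  have hK : 0 ≤ K :=
    setIntegral_nonneg measurableSet_ball fun z _ => rpow_nonneg (norm_nonneg z) e
  refine ⟨(2 / π) ^ p * (2 * K) + 1, by positivity, fun y₁ y₂ hy₁ hy₂ => ?_⟩
  have hint₁ := integrableOn_norm_sub_rpow (μ := volume) hd he (hsub y₁ hy₁)
  have hint₂ := integrableOn_norm_sub_rpow (μ := volume) hd he (hsub y₂ hy₂)
  set C := (2 / π) ^ p * ‖y₁ - y₂‖ ^ p
  calc ∫ x in ball (0 : ℂ) 1,
          (1 - ‖x‖) ^ a * |unitDiscPoissonKernel x y₁ - unitDiscPoissonKernel x y₂| ^ p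
      ≤ ∫ x in ball (0 : ℂ) 1, C * (‖x - y₁‖ ^ e + ‖x - y₂‖ ^ e) := by
        refine integral_mono_of_nonneg ?_ ((hint₁.add hint₂).const_mul C) ?_
        <;> filter_upwards [ae_restrict_mem measurableSet_ball] with x hx
        <;> rw [mem_ball_zero_iff] at hx
        · have : 0 ≤ 1 - ‖x‖ := by linarith
          positivity
        · exact one_sub_norm_rpow_mul_abs_unitDiscPoissonKernel_sub_rpow_le hp.le
            (by linarith) hx hy₁ hy₂
    _ = C * ((∫ x in ball (0 : ℂ) 1, ‖x - y₁‖ ^ e) + ∫ x in ball (0 : ℂ) 1, ‖x - y₂‖ ^ e) := by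
        rw [integral_const_mul, integral_add hint₁ hint₂]
    _ ≤ C * (K + K) := by
        gcongr
        · exact setIntegral_norm_sub_rpow_le hd he (hsub y₁ hy₁)
        · exact setIntegral_norm_sub_rpow_le hd he (hsub y₂ hy₂)
    _ ≤ ((2 / π) ^ p * (2 * K) + 1) * ‖y₁ - y₂‖ ^ p := by
        have : 0 ≤ ‖y₁ - y₂‖ ^ p := by positivity
        simp only [C]
        nlinarith
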